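/- arXiv:1312.7186 — 5 statements merged into one kernel-verified Lean document; each statement's English description precedes it below -/
import Mathlib

section
/- For any two real scalars w and v, the quantile check function satisfies ρ_τ(w−v) − ρ_τ(w) = −v(τ − 1{w ≤ 0}) + ∫₀^v (1{w ≤ z} − 1{w ≤ 0}) dz, where ρ_τ(t) = t(τ − 1{t ≤ 0}). -/
/-! The step function `z ↦ 1{w ≤ z}` is the right derivative of the ramp `max (z - w) 0`,
so by the fundamental theorem of calculus the integral is a difference of two ramps, and
the identity reduces to a piecewise-linear check on the signs of `w`, `v - w` and `w - v`. -/

open intervalIntegral Set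

lemma monotone_ite_le_one_zero (w : ℝ) :
    Monotone fun z : ℝ => if w ≤ z then (1 : ℝ) else 0 := by
  intro x y hxy
  dsimp only
  split_ifs <;> linarith

lemma hasDerivWithinAt_max_sub_zero_Ioi (w x : ℝ) :
    HasDerivWithinAt (fun z => max (z - w) 0) (if w ≤ x then 1 else 0) (Ioi x) x := by
  split_ifs with hwx
  · refine ((hasDerivAt_id x).sub_const w).hasDerivWithinAt.congr (fun z hz => ?_) ?_
    · exact max_eq_left (sub_nonneg.2 (hwx.trans (le_of_lt hz)))
    · exact max_eq_left (sub_nonneg.2 hwx)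
  · refine ((hasDerivAt_const x (0 : ℝ)).congr_of_eventuallyEq ?_).hasDerivWithinAt
    filter_upwards [Iio_mem_nhds (not_le.1 hwx)] with z hz
    exact max_eq_right (sub_nonpos.2 (le_of_lt hz))

lemma integral_ite_le_one_zero (w a b : ℝ) :
    ∫ z in a..b, (if w ≤ z then (1 : ℝ) else 0) = max (b - w) 0 - max (a - w) 0 :=
  integral_eq_sub_of_hasDeriv_right (by fun_prop)
    (fun x _ => hasDerivWithinAt_max_sub_zero_Ioi w x)
    (monotone_ite_le_one_zero w).intervalIntegrable

theorem knight_identity_general (τ : ℝ) (w v : ℝ) :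
    (w - v) * (τ - if w - v ≤ 0 then 1 else 0) - w * (τ - if w ≤ 0 then 1 else 0) =
      -v * (τ - if w ≤ 0 then 1 else 0) +
        ∫ z in (0:ℝ)..v, ((if w ≤ z then (1:ℝ) else 0) - if w ≤ 0 then 1 else 0) := by
  rw [integral_sub (monotone_ite_le_one_zero w).intervalIntegrable intervalIntegrable_const,
    integral_ite_le_one_zero, integral_const, smul_eq_mul, sub_zero]
  simp only [sub_nonpos, max_def]
  split_ifs <;> linarith

/-- Knight's identity: for the quantile check function `ρ_τ(t) = t(τ − 1{t ≤ 0})`,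
for any real scalars `w` and `v`,
`ρ_τ(w−v) − ρ_τ(w) = −v(τ − 1{w ≤ 0}) + ∫₀^v (1{w ≤ z} − 1{w ≤ 0}) dz`. -/
theorem knight_identity (τ : ℝ) (hτ : τ ∈ Set.Ioo (0:ℝ) 1) (w v : ℝ) :
    (w - v) * (τ - if w - v ≤ 0 then 1 else 0) - w * (τ - if w ≤ 0 then 1 else 0) =
      -v * (τ - if w ≤ 0 then 1 else 0) +
        ∫ z in (0:ℝ)..v, ((if w ≤ z then (1:ℝ) else 0) - if w ≤ 0 then 1 else 0) :=
  knight_identity_general τ w v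
end

section
/- Let x₁,…,xₙ ∈ ℝ^p, define the empirical prediction seminorm ‖x_i'δ‖_{2,n} = (n^{-1}∑ᵢ (xᵢ'δ)²)^{1/2} and the maximal m-sparse eigenvalue φ_max(m) = max over δ with 1 ≤ ‖δ‖₀ ≤ m of δ'(n^{-1}∑ xᵢxᵢ')δ / ‖δ‖². Let β̂, β₀ ∈ ℝ^p with ‖β₀‖₀ ≤ s ≤ m. Then ‖x_i'(β̂^(2m) − β₀)‖_{2,n} ≤ ‖x_i'(β̂ − β₀)‖_{2,n} + (φ_max(m)/m)^{1/2} ‖β̂ − β₀‖₁. -/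
/-!
Write `β̂^(2m) − β₀ = (β̂ − β₀) − r` with `r = β̂ − β̂^(2m)`, so by the triangle inequality it
suffices to bound the prediction norm of the residual `r`. Let `t` be the smallest retained
magnitude, so `|r_j| ≤ t` for all `j`. Peeling off the `m` largest entries of a vector bounded
entrywise by `t` leaves an `m`-sparse block with `ℓ₂` norm at most `√m · t` and a remainder bounded
entrywise by the block's `ℓ₁` norm divided by `m`; iterating, with `φ_max(m)` controlling each
block, gives `‖x_i'r‖_{2,n} ≤ (φ_max(m)/m)^{1/2} (m t + ‖r‖₁)`. Finally, since `β₀` has at most `m`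
nonzeros, at least `m + |supp β₀ \ S|` retained indices lie off `supp β₀`, each of magnitude
`≥ t`, which pays for both `m t` and the entries of `r` on `supp β₀`; hence
`m t + ‖r‖₁ ≤ ‖β̂ − β₀‖₁`.
-/
open Finset

section

variable {ι α : Type*} [DecidableEq ι] [LinearOrder α]

theorem Finset.exists_subset_card_eq_largest (f : ι → α) (T : Finset ι) :
    ∀ k ≤ #T, ∃ U ⊆ T, #U = k ∧ ∀ i ∈ U, ∀ j ∈ T \ U, f j ≤ f i := by
  intro k
  induction k with
  | zero => intro _; exact ⟨∅, empty_subset T, card_empty, by simp⟩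
  | succ k ih =>
    intro hk
    obtain ⟨U, hUT, hUcard, hUlarge⟩ := ih (by omega)
    have hrest : (T \ U).Nonempty := by
      rw [← card_pos, card_sdiff_of_subset hUT]
      omega
    obtain ⟨i₀, hi₀, hi₀max⟩ := exists_max_image (T \ U) f hrest
    obtain ⟨hi₀T, hi₀U⟩ := mem_sdiff.mp hi₀
    refine ⟨insert i₀ U, insert_subset hi₀T hUT, by rw [card_insert_of_notMem hi₀U, hUcard], ?_⟩
    intro i hi j hj
    obtain ⟨hjT, hjU⟩ := mem_sdiff.mp hj
    have hj' : j ∈ T \ U := mem_sdiff.mpr ⟨hjT, fun h => hjU (mem_insert_of_mem h)⟩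
    rcases mem_insert.mp hi with rfl | hiU
    · exact hi₀max j hj'
    · exact hUlarge i hiU j hj'

theorem abs_piecewise_zero_le (S : Finset ι) (v : ι → ℝ) (j : ι) : |S.piecewise v 0 j| ≤ |v j| := by
  by_cases hj : j ∈ S <;> simp [hj]

end

section

variable {ι : Type*} [Fintype ι] [DecidableEq ι]

theorem piecewise_zero_add_piecewise_compl_zero (S : Finset ι) (v : ι → ℝ) :
    S.piecewise v 0 + Sᶜ.piecewise v 0 = v := by
  ext j
  by_cases hj : j ∈ S <;> simp [hj]

theorem abs_piecewise_compl_zero_le {U : Finset ι} {v : ι → ℝ}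
    (hU : ∀ i ∈ U, ∀ j ∉ U, |v j| ≤ |v i|) {i : ι} (hi : i ∈ U) (j : ι) :
    |Uᶜ.piecewise v 0 j| ≤ |v i| := by
  by_cases hj : j ∈ U
  · simp [hj]
  · simpa [hj] using hU i hi j hj

theorem sum_abs_piecewise_zero (S : Finset ι) (v : ι → ℝ) :
    ∑ j, |S.piecewise v 0 j| = ∑ j ∈ S, |v j| := by
  simp [Finset.piecewise, apply_ite]

theorem filter_piecewise_zero_ne_zero (S : Finset ι) (v : ι → ℝ) :
    ({j | S.piecewise v 0 j ≠ 0} : Finset ι) = S ∩ ({j | v j ≠ 0} : Finset ι) := by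
  ext j
  by_cases hj : j ∈ S <;> simp [hj]

theorem exists_card_eq_largest_abs (v : ι → ℝ) {m : ℕ} (hm : m ≤ #{j | v j ≠ 0}) :
    ∃ U ⊆ ({j | v j ≠ 0} : Finset ι), #U = m ∧ ∀ i ∈ U, ∀ j ∉ U, |v j| ≤ |v i| := by
  obtain ⟨U, hUT, hUcard, hUlarge⟩ := exists_subset_card_eq_largest (fun j => |v j|) _ m hm
  refine ⟨U, hUT, hUcard, fun i hi j hjU => ?_⟩
  by_cases hj : v j = 0
  · simp [hj]
  · exact hUlarge i hi j (mem_sdiff.mpr ⟨by simpa using hj, hjU⟩)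

theorem sum_compl_abs_le_sum_abs_sub (b c : ι → ℝ) :
    ∑ j ∈ ({j | c j ≠ 0} : Finset ι)ᶜ, |b j| ≤ ∑ j, |b j - c j| := by
  calc ∑ j ∈ ({j | c j ≠ 0} : Finset ι)ᶜ, |b j| = ∑ j ∈ ({j | c j ≠ 0} : Finset ι)ᶜ, |b j - c j| :=
        sum_congr rfl fun j hj => by simp_all
    _ ≤ ∑ j, |b j - c j| := sum_le_univ_sum_of_nonneg fun j => abs_nonneg _

theorem natCast_mul_add_sum_compl_le {S A : Finset ι} {m : ℕ} (hcard : m + #A ≤ #S)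
    {b : ι → ℝ} {t : ℝ} (ht : 0 ≤ t) (hin : ∀ i ∈ S, t ≤ |b i|) (hout : ∀ j ∉ S, |b j| ≤ t) :
    m * t + ∑ j ∈ Sᶜ, |b j| ≤ ∑ j ∈ Aᶜ, |b j| := by
  have hcard' : m + #(A \ S) ≤ #(S \ A) := by
    have hS := card_sdiff_add_card_inter S A
    have hA := card_sdiff_add_card_inter A S
    rw [inter_comm] at hA
    omega
  have hexchange : m * t + ∑ j ∈ A \ S, |b j| ≤ ∑ j ∈ S \ A, |b j| :=
    calc m * t + ∑ j ∈ A \ S, |b j| ≤ m * t + #(A \ S) * t := by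
          grw [sum_le_card_nsmul _ _ t fun j hj => hout j (mem_sdiff.mp hj).2, nsmul_eq_mul]
      _ = (m + #(A \ S) : ℕ) * t := by push_cast; ring
      _ ≤ #(S \ A) * t := by gcongr
      _ ≤ ∑ j ∈ S \ A, |b j| := by
          rw [← nsmul_eq_mul]
          exact card_nsmul_le_sum _ _ t fun i hi => hin i (mem_sdiff.mp hi).1
  have hdiff := sum_sdiff_sub_sum_sdiff (s₁ := A) (s₂ := S) (f := fun j => |b j|)
  have hS := sum_compl_add_sum S fun j => |b j|
  have hA := sum_compl_add_sum A fun j => |b j|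
  linarith

theorem le_mul_add_sum_abs_of_sparse {N : (ι → ℝ) → ℝ} (hN : ∀ a b, N (a + b) ≤ N a + N b)
    {m : ℕ} (hm : 0 < m) {c : ℝ} (hc : 0 ≤ c)
    (hsparse : ∀ w t, #{j | w j ≠ 0} ≤ m → 0 ≤ t → (∀ j, |w j| ≤ t) → N w ≤ c * (m * t))
    (v : ι → ℝ) (t : ℝ) (ht : 0 ≤ t) (hvt : ∀ j, |v j| ≤ t) :
    N v ≤ c * (m * t + ∑ j, |v j|) := by
  induction hk : #{j | v j ≠ 0} using Nat.strong_induction_on generalizing v t with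
  | _ k ih =>
  by_cases hkm : k ≤ m
  · calc N v ≤ c * (m * t) := hsparse v t (hk ▸ hkm) ht hvt
      _ ≤ c * (m * t + ∑ j, |v j|) := by
          gcongr
          exact le_add_of_nonneg_right (sum_nonneg fun j _ => abs_nonneg _)
  obtain ⟨U, hUT, hUcard, hUlarge⟩ := exists_card_eq_largest_abs v (m := m) (by omega)
  have hUne : U.Nonempty := card_pos.mp (hUcard ▸ hm)
  -- the smallest retained entry bounds everything left over
  obtain ⟨i₀, hi₀, hi₀min⟩ := U.exists_min_image (fun j => |v j|) hUne
  have hhead_sparse : #{j | U.piecewise v 0 j ≠ 0} ≤ m := by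
    rw [filter_piecewise_zero_ne_zero, ← hUcard]
    exact card_le_card inter_subset_left
  have htail_card : #{j | Uᶜ.piecewise v 0 j ≠ 0} < k := by
    rw [filter_piecewise_zero_ne_zero, inter_comm, ← sdiff_eq_inter_compl,
      card_sdiff_of_subset hUT, hk]
    omega
  have hhead_le : ∀ j, |U.piecewise v 0 j| ≤ t :=
    fun j => (abs_piecewise_zero_le U v j).trans (hvt j)
  have hhead_l1 : m * |v i₀| ≤ ∑ j, |U.piecewise v 0 j| := by
    rw [sum_abs_piecewise_zero, ← hUcard, ← nsmul_eq_mul]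
    exact card_nsmul_le_sum _ _ _ hi₀min
  have hl1 : ∑ j, |v j| = ∑ j, |U.piecewise v 0 j| + ∑ j, |Uᶜ.piecewise v 0 j| := by
    rw [sum_abs_piecewise_zero, sum_abs_piecewise_zero, add_comm, sum_compl_add_sum]
  calc N v = N (U.piecewise v 0 + Uᶜ.piecewise v 0) := by
        rw [piecewise_zero_add_piecewise_compl_zero]
    _ ≤ N (U.piecewise v 0) + N (Uᶜ.piecewise v 0) := hN _ _
    _ ≤ c * (m * t) + c * (m * |v i₀| + ∑ j, |Uᶜ.piecewise v 0 j|) :=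
        add_le_add (hsparse _ t hhead_sparse ht hhead_le)
          (ih _ htail_card _ _ (abs_nonneg _) (abs_piecewise_compl_zero_le hUlarge hi₀) rfl)
    _ ≤ c * (m * t + ∑ j, |v j|) := by
        have := mul_le_mul_of_nonneg_left hhead_l1 hc
        rw [hl1]
        linarith

end

section

variable {n : ℕ} {ι : Type*} [Fintype ι] (x : Matrix (Fin n) ι ℝ)

noncomputable def predNorm (v : ι → ℝ) : ℝ :=
  √((1 / (n : ℝ)) * ∑ i, (∑ j, x i j * v j) ^ 2)

theorem predNorm_eq_mul_norm (v : ι → ℝ) :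
    predNorm x v =
      √(1 / (n : ℝ)) * ‖(WithLp.toLp 2 (Matrix.mulVec x v) : EuclideanSpace ℝ (Fin n))‖ := by
  rw [predNorm, EuclideanSpace.norm_eq, Real.sqrt_mul (by positivity)]
  simp [Matrix.mulVec, dotProduct]

theorem predNorm_add_le (a b : ι → ℝ) : predNorm x (a + b) ≤ predNorm x a + predNorm x b := by
  rw [predNorm_eq_mul_norm, predNorm_eq_mul_norm, predNorm_eq_mul_norm, ← mul_add,
    Matrix.mulVec_add, WithLp.toLp_add]
  gcongr
  exact norm_add_le _ _

theorem predNorm_sub_le (a b : ι → ℝ) : predNorm x (a - b) ≤ predNorm x a + predNorm x b := by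
  rw [predNorm_eq_mul_norm, predNorm_eq_mul_norm, predNorm_eq_mul_norm, ← mul_add,
    Matrix.mulVec_sub, WithLp.toLp_sub]
  gcongr
  exact norm_sub_le _ _

theorem predNorm_le_of_sparse {m : ℕ} {φ : ℝ}
    (hφ : ∀ δ : ι → ℝ, δ ≠ 0 → #{j | δ j ≠ 0} ≤ m →
      (1 / (n : ℝ)) * ∑ i, (∑ j, x i j * δ j) ^ 2 ≤ φ * ∑ j, (δ j) ^ 2)
    {w : ι → ℝ} (hw : #{j | w j ≠ 0} ≤ m) {t : ℝ} (ht : 0 ≤ t) (hwt : ∀ j, |w j| ≤ t) :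
    predNorm x w ≤ √(φ / m) * (m * t) := by
  have hquad : (1 / (n : ℝ)) * ∑ i, (∑ j, x i j * w j) ^ 2 ≤ φ * ∑ j, (w j) ^ 2 := by
    by_cases hw0 : w = 0
    · simp [hw0]
    · exact hφ w hw0 hw
  have hl2 : ∑ j, (w j) ^ 2 ≤ m * t ^ 2 :=
    calc ∑ j, (w j) ^ 2 = ∑ j with w j ≠ 0, (w j) ^ 2 :=
          (sum_filter_of_ne fun j _ hj => by simpa using hj).symm
      _ ≤ ∑ j with w j ≠ 0, t ^ 2 :=
          sum_le_sum fun j _ => by simpa [sq_abs] using pow_le_pow_left₀ (abs_nonneg _) (hwt j) 2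
      _ ≤ m * t ^ 2 := by
          rw [sum_const, nsmul_eq_mul]
          gcongr
  calc predNorm x w ≤ √(φ * ∑ j, (w j) ^ 2) := Real.sqrt_le_sqrt hquad
    _ = √φ * √(∑ j, (w j) ^ 2) := Real.sqrt_mul' _ (sum_nonneg fun j _ => sq_nonneg _)
    _ ≤ √φ * √(m * t ^ 2) := by gcongr
    _ = √φ * ((m : ℝ) / √m) * t := by
        rw [Real.div_sqrt, Real.sqrt_mul' _ (sq_nonneg t), Real.sqrt_sq ht, mul_assoc]
    _ = √(φ / m) * (m * t) := by
        rw [Real.sqrt_div' _ (Nat.cast_nonneg m)]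
        ring

end

/-- `φmax` is any upper bound on the `m`-sparse Rayleigh quotients, and `S`, a set of `2m` indices
carrying the largest components of `βhat`, encodes the truncation:
`β̂^(2m) = fun j => if j ∈ S then βhat j else 0`. -/
theorem trunc_prediction_norm_bound_general (n p s m : ℕ) (hm : 0 < m) (hsm : s ≤ m)
    (x : Fin n → Fin p → ℝ) (βhat β₀ : Fin p → ℝ)
    (hβ₀ : (univ.filter fun j => β₀ j ≠ 0).card ≤ s)
    (φmax : ℝ)
    (hφ : ∀ δ : Fin p → ℝ, δ ≠ 0 → (univ.filter fun j => δ j ≠ 0).card ≤ m →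
      (1 / (n : ℝ)) * ∑ i, (∑ j, x i j * δ j) ^ 2 ≤ φmax * ∑ j, (δ j) ^ 2)
    (S : Finset (Fin p)) (hScard : S.card = 2 * m)
    (hS : ∀ i ∈ S, ∀ j ∉ S, |βhat j| ≤ |βhat i|) :
    Real.sqrt ((1 / (n : ℝ)) * ∑ i, (∑ j, x i j * ((if j ∈ S then βhat j else 0) - β₀ j)) ^ 2) ≤
      Real.sqrt ((1 / (n : ℝ)) * ∑ i, (∑ j, x i j * (βhat j - β₀ j)) ^ 2) +
        Real.sqrt (φmax / m) * ∑ j, |βhat j - β₀ j| := by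
  obtain ⟨i₀, hi₀, hi₀min⟩ := S.exists_min_image (fun j => |βhat j|) (card_pos.mp (by omega))
  have htrunc : S.piecewise βhat 0 - β₀ = (βhat - β₀) - Sᶜ.piecewise βhat 0 := by
    ext j
    by_cases hj : j ∈ S <;> simp [hj]
  have hresidual : predNorm x (Sᶜ.piecewise βhat 0) ≤
      √(φmax / m) * (m * |βhat i₀| + ∑ j ∈ Sᶜ, |βhat j|) := by
    rw [← sum_abs_piecewise_zero]
    exact le_mul_add_sum_abs_of_sparse (predNorm_add_le x) hm (Real.sqrt_nonneg _)
      (fun w t hw ht hwt => predNorm_le_of_sparse x hφ hw ht hwt) _ _ (abs_nonneg _)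
      (abs_piecewise_compl_zero_le hS hi₀)
  have hl1 : m * |βhat i₀| + ∑ j ∈ Sᶜ, |βhat j| ≤ ∑ j, |βhat j - β₀ j| :=
    (natCast_mul_add_sum_compl_le (A := {j | β₀ j ≠ 0}) (by omega) (abs_nonneg _) hi₀min
      (hS i₀ hi₀)).trans (sum_compl_abs_le_sum_abs_sub βhat β₀)
  show predNorm x (S.piecewise βhat 0 - β₀) ≤ predNorm x (βhat - β₀) + _
  rw [htrunc]
  calc predNorm x ((βhat - β₀) - Sᶜ.piecewise βhat 0)
      ≤ predNorm x (βhat - β₀) + predNorm x (Sᶜ.piecewise βhat 0) := predNorm_sub_le x _ _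
    _ ≤ predNorm x (βhat - β₀) + √(φmax / m) * ∑ j, |βhat j - β₀ j| := by
        grw [hresidual, hl1]

/-- Prediction-norm bound for the `2m`-truncation.  With
`‖x_i'δ‖_{2,n} = (n⁻¹ ∑ᵢ (xᵢ'δ)²)^{1/2}` and `φ_max(m)` the maximal `m`-sparse eigenvalue of the
empirical Gram matrix (here: any upper bound `φmax` on the `m`-sparse Rayleigh quotients), if
`‖β₀‖₀ ≤ s ≤ m` and `β̂^(2m)` keeps the `2m` largest components of `β̂` (encoded by a set `S`
of `2m` indices carrying the largest components), then
`‖x_i'(β̂^(2m) − β₀)‖_{2,n} ≤ ‖x_i'(β̂ − β₀)‖_{2,n} + (φ_max(m)/m)^{1/2} ‖β̂ − β₀‖₁`. -/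
theorem trunc_prediction_norm_bound (n p s m : ℕ) (hn : 0 < n) (hm : 0 < m) (hsm : s ≤ m)
    (x : Fin n → Fin p → ℝ) (βhat β₀ : Fin p → ℝ)
    (hβ₀ : (univ.filter fun j => β₀ j ≠ 0).card ≤ s)
    (φmax : ℝ)
    (hφ : ∀ δ : Fin p → ℝ, δ ≠ 0 → (univ.filter fun j => δ j ≠ 0).card ≤ m →
      (1 / (n : ℝ)) * ∑ i, (∑ j, x i j * δ j) ^ 2 ≤ φmax * ∑ j, (δ j) ^ 2)
    (S : Finset (Fin p)) (hScard : S.card = 2 * m)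
    (hS : ∀ i ∈ S, ∀ j ∉ S, |βhat j| ≤ |βhat i|) :
    Real.sqrt ((1 / (n : ℝ)) * ∑ i, (∑ j, x i j * ((if j ∈ S then βhat j else 0) - β₀ j)) ^ 2) ≤
      Real.sqrt ((1 / (n : ℝ)) * ∑ i, (∑ j, x i j * (βhat j - β₀ j)) ^ 2) +
        Real.sqrt (φmax / m) * ∑ j, |βhat j - β₀ j| :=
  trunc_prediction_norm_bound_general n p s m hm hsm x βhat β₀ hβ₀ φmax hφ S hScard hS
end

section
/- For any positive semidefinite p×p matrix M, any integer k ≥ 1 and any real ℓ ≥ 1, the maximal sparse eigenvalue satisfies φ_max(⌈ℓk⌉)(M) ≤ ⌈ℓ⌉ · φ_max(k)(M), where φ_max(m)(M) = max over δ with 1 ≤ ‖δ‖₀ ≤ m, ‖δ‖ = 1 of δ'Mδ. -/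
/-!
Factor `M = Bᵀ B`, so that `δᵀ M δ = ‖B δ‖²`. Split the support of a `⌈ℓk⌉`-sparse unit vector `δ`
into `n = ⌈ℓ⌉` blocks of at most `k` coordinates, `δ = d₀ + ⋯ + d_{n-1}` with disjoint supports.
By Cauchy–Schwarz `‖∑ B dᵢ‖² ≤ n ∑ ‖B dᵢ‖²`, by homogeneity `‖B dᵢ‖² ≤ ‖dᵢ‖² φ_max(k)`, and the
disjoint supports give `∑ ‖dᵢ‖² = ‖δ‖² = 1`.
-/

open Finset Matrix

theorem Finset.exists_coloring_card_fiber_le {α : Type*} [DecidableEq α] {s : Finset α}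
    {n k : ℕ} (h : #s ≤ n * k) :
    ∃ f : α → ℕ, (∀ a ∈ s, f a < n) ∧ ∀ i, #{a ∈ s | f a = i} ≤ k := by
  induction n generalizing s with
  | zero => simp_all
  | succ n ih =>
    rw [Nat.succ_mul] at h
    obtain ⟨t, hts, ht⟩ := exists_subset_card_eq (s := s) (n := #s - n * k) (by omega)
    obtain ⟨g, hg, hgk⟩ := ih (s := s \ t) (by rw [card_sdiff_of_subset hts]; omega)
    refine ⟨fun a => if a ∈ t then n else g a, fun a ha => ?_, fun i => ?_⟩
    · by_cases hat : a ∈ t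
      · simp [hat]
      · simpa [hat] using (hg a (mem_sdiff.2 ⟨ha, hat⟩)).trans n.lt_succ_self
    by_cases hi : i = n
    · refine (card_le_card fun a ha => ?_).trans (show #t ≤ k by omega)
      by_contra hat
      simp only [mem_filter, hat, if_false] at ha
      exact (hg a (mem_sdiff.2 ⟨ha.1, hat⟩)).ne (ha.2.trans hi)
    · refine (card_le_card fun a ha => ?_).trans (hgk i)
      by_cases hat : a ∈ t
      · simp [hat, Ne.symm hi] at ha
      · simpa [hat] using ha

variable {ι κ : Type*} [Fintype ι]

theorem Matrix.dotProduct_self_sum_le (s : Finset κ) (w : κ → ι → ℝ) :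
    (∑ i ∈ s, w i) ⬝ᵥ (∑ i ∈ s, w i) ≤ #s * ∑ i ∈ s, w i ⬝ᵥ w i := by
  simp only [dotProduct, Finset.sum_apply, ← sq]
  rw [Finset.sum_comm, Finset.mul_sum]
  exact Finset.sum_le_sum fun j _ => sq_sum_le_card_mul_sum_sq

open scoped MatrixOrder in
theorem Matrix.PosSemidef.dotProduct_mulVec_sum_le {M : Matrix ι ι ℝ} (hM : M.PosSemidef)
    (s : Finset κ) (v : κ → ι → ℝ) :
    (∑ i ∈ s, v i) ⬝ᵥ M *ᵥ (∑ i ∈ s, v i) ≤ #s * ∑ i ∈ s, v i ⬝ᵥ M *ᵥ v i := by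
  classical
  obtain ⟨B, rfl⟩ := CStarAlgebra.nonneg_iff_eq_star_mul_self.mp hM.nonneg
  have hquad (x : ι → ℝ) : x ⬝ᵥ (star B * B) *ᵥ x = (B *ᵥ x) ⬝ᵥ (B *ᵥ x) := by
    rw [← mulVec_mulVec, dotProduct_mulVec, star_eq_conjTranspose,
      conjTranspose_eq_transpose_of_trivial, vecMul_transpose]
  simp only [hquad, mulVec_sum B]
  exact dotProduct_self_sum_le s _

theorem abs_le_one_of_sum_sq_eq_one {δ : ι → ℝ} (hδ : ∑ j, δ j ^ 2 = 1) (i : ι) : |δ i| ≤ 1 := by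
  rw [← sq_le_one_iff_abs_le_one, ← hδ]
  exact single_le_sum (fun j _ => sq_nonneg (δ j)) (mem_univ i)

theorem exists_sparse_decomposition {δ : ι → ℝ} {n k : ℕ} (h : hammingNorm δ ≤ n * k) :
    ∃ d : ℕ → ι → ℝ, ∑ i ∈ range n, d i = δ ∧ (∀ i, hammingNorm (d i) ≤ k) ∧
      ∑ i ∈ range n, ∑ j, d i j ^ 2 = ∑ j, δ j ^ 2 := by
  classical
  obtain ⟨f, hfn, hfk⟩ := exists_coloring_card_fiber_le h
  have hsum (g : ℝ → ℝ) (hg : g 0 = 0) (j : ι) :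
      ∑ i ∈ range n, g (if f j = i then δ j else 0) = g (δ j) := by
    simp only [apply_ite g, hg, sum_ite_eq, mem_range, ite_eq_left_iff]
    intro hj
    have hδj : δ j = 0 := by_contra fun hδj => hj (hfn j (by simpa using hδj))
    rw [hδj, hg]
  refine ⟨fun i j => if f j = i then δ j else 0, ?_, fun i => ?_, ?_⟩
  · ext j
    simpa [Finset.sum_apply] using hsum id rfl j
  · refine (card_le_card fun j hj => ?_).trans (hfk i)
    simp only [mem_filter, mem_univ, true_and, ne_eq, ite_eq_right_iff, not_forall] at hj ⊢
    exact ⟨hj.2, hj.1⟩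
  · rw [sum_comm]
    exact sum_congr rfl fun j _ => hsum (· ^ 2) (zero_pow two_ne_zero) j

/-- `hammingNorm δ` is the paper's `‖δ‖₀`. -/
def sparseRayleighValues (M : Matrix ι ι ℝ) (m : ℕ) : Set ℝ :=
  {r | ∃ δ : ι → ℝ, 1 ≤ hammingNorm δ ∧ hammingNorm δ ≤ m ∧ ∑ j, δ j ^ 2 = 1 ∧
    r = δ ⬝ᵥ M *ᵥ δ}

noncomputable def maxSparseEigenvalue (M : Matrix ι ι ℝ) (m : ℕ) : ℝ :=
  sSup (sparseRayleighValues M m)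

theorem bddAbove_sparseRayleighValues (M : Matrix ι ι ℝ) (m : ℕ) :
    BddAbove (sparseRayleighValues M m) := by
  refine ⟨∑ i, ∑ j, |M i j|, ?_⟩
  rintro _ ⟨δ, -, -, hδ, rfl⟩
  have hδ1 := abs_le_one_of_sum_sq_eq_one hδ
  simp only [dotProduct, mulVec, mul_sum]
  refine sum_le_sum fun i _ => sum_le_sum fun j _ => ?_
  calc δ i * (M i j * δ j) ≤ |δ i| * (|M i j| * |δ j|) := by
        rw [← abs_mul, ← abs_mul]; exact le_abs_self _
    _ ≤ 1 * (|M i j| * 1) := by gcongr <;> exact hδ1 _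
    _ = |M i j| := by ring

theorem Matrix.PosSemidef.maxSparseEigenvalue_nonneg {M : Matrix ι ι ℝ} (hM : M.PosSemidef)
    (m : ℕ) : 0 ≤ maxSparseEigenvalue M m := by
  refine Real.sSup_nonneg ?_
  rintro _ ⟨δ, -, -, -, rfl⟩
  simpa using hM.dotProduct_mulVec_nonneg δ

theorem dotProduct_mulVec_le_maxSparseEigenvalue (M : Matrix ι ι ℝ) {m : ℕ} {v : ι → ℝ}
    (hv : hammingNorm v ≤ m) : v ⬝ᵥ M *ᵥ v ≤ (∑ j, v j ^ 2) * maxSparseEigenvalue M m := by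
  rcases eq_or_ne v 0 with rfl | hv0
  · simp
  set c := ∑ j, v j ^ 2
  have hc : 0 < c := by
    obtain ⟨j, hj⟩ := Function.ne_iff.mp hv0
    exact sum_pos' (fun j _ => sq_nonneg _) ⟨j, mem_univ j, sq_pos_of_ne_zero hj⟩
  set a := (√c)⁻¹
  have ha : a ≠ 0 := by positivity
  have ha2 : a ^ 2 = c⁻¹ := by rw [inv_pow, Real.sq_sqrt hc.le]
  have hsupp : hammingNorm (a • v) = hammingNorm v :=
    hammingNorm_smul (fun _ => .of_ne_zero ha) v
  have hmem : c⁻¹ * (v ⬝ᵥ M *ᵥ v) ∈ sparseRayleighValues M m := by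
    refine ⟨a • v, ?_, hsupp.trans_le hv, ?_, ?_⟩
    · exact hsupp ▸ hammingNorm_pos_iff.2 hv0
    · simp only [Pi.smul_apply, smul_eq_mul, mul_pow, ← mul_sum, ha2]
      exact inv_mul_cancel₀ hc.ne'
    · rw [mulVec_smul, dotProduct_smul, smul_dotProduct, smul_eq_mul, smul_eq_mul, ← mul_assoc,
        ← sq, ha2]
  exact (inv_mul_le_iff₀ hc).1 (le_csSup (bddAbove_sparseRayleighValues M m) hmem)

theorem Matrix.PosSemidef.maxSparseEigenvalue_le_mul {M : Matrix ι ι ℝ} (hM : M.PosSemidef)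
    {m n k : ℕ} (h : m ≤ n * k) : maxSparseEigenvalue M m ≤ n * maxSparseEigenvalue M k := by
  refine Real.sSup_le ?_ (mul_nonneg n.cast_nonneg (hM.maxSparseEigenvalue_nonneg k))
  rintro _ ⟨δ, -, hδm, hδ, rfl⟩
  obtain ⟨d, rfl, hdk, hd⟩ := exists_sparse_decomposition (hδm.trans h)
  calc (∑ i ∈ range n, d i) ⬝ᵥ M *ᵥ (∑ i ∈ range n, d i)
      ≤ n * ∑ i ∈ range n, d i ⬝ᵥ M *ᵥ d i := by
        simpa using hM.dotProduct_mulVec_sum_le (range n) d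
    _ ≤ n * ∑ i ∈ range n, (∑ j, d i j ^ 2) * maxSparseEigenvalue M k := by
      gcongr with i
      exact dotProduct_mulVec_le_maxSparseEigenvalue M (hdk i)
    _ = n * maxSparseEigenvalue M k := by rw [← sum_mul, hd, hδ, one_mul]

theorem sparse_eigenvalue_sublinear_general (p : ℕ) (M : Matrix (Fin p) (Fin p) ℝ)
    (hM : M.PosSemidef) (k : ℕ) (ℓ : ℝ) :
    (fun m : ℕ => sSup {r : ℝ | ∃ δ : Fin p → ℝ,
        1 ≤ (univ.filter fun j => δ j ≠ 0).card ∧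
        (univ.filter fun j => δ j ≠ 0).card ≤ m ∧
        (∑ j, (δ j) ^ 2) = 1 ∧ r = δ ⬝ᵥ M.mulVec δ}) (Nat.ceil (ℓ * k)) ≤
      (Nat.ceil ℓ : ℝ) *
      (fun m : ℕ => sSup {r : ℝ | ∃ δ : Fin p → ℝ,
        1 ≤ (univ.filter fun j => δ j ≠ 0).card ∧
        (univ.filter fun j => δ j ≠ 0).card ≤ m ∧
        (∑ j, (δ j) ^ 2) = 1 ∧ r = δ ⬝ᵥ M.mulVec δ}) k := by
  -- both sides are `maxSparseEigenvalue M _` up to unfolding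
  refine hM.maxSparseEigenvalue_le_mul (Nat.ceil_le.2 ?_)
  push_cast
  gcongr
  exact Nat.le_ceil ℓ

/-- Sub-linearity of maximal sparse eigenvalues: for a positive semidefinite `p × p` matrix `M`,
integer `k ≥ 1` and real `ℓ ≥ 1`,
`φ_max(⌈ℓk⌉)(M) ≤ ⌈ℓ⌉ · φ_max(k)(M)`, where
`φ_max(m)(M) = sup { δ'Mδ : 1 ≤ ‖δ‖₀ ≤ m, ‖δ‖ = 1 }`. -/
theorem sparse_eigenvalue_sublinear (p : ℕ) (M : Matrix (Fin p) (Fin p) ℝ)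
    (hM : M.PosSemidef) (k : ℕ) (hk : 1 ≤ k) (ℓ : ℝ) (hℓ : 1 ≤ ℓ) :
    (fun m : ℕ => sSup {r : ℝ | ∃ δ : Fin p → ℝ,
        1 ≤ (univ.filter fun j => δ j ≠ 0).card ∧
        (univ.filter fun j => δ j ≠ 0).card ≤ m ∧
        (∑ j, (δ j) ^ 2) = 1 ∧ r = δ ⬝ᵥ M.mulVec δ}) (Nat.ceil (ℓ * k)) ≤
      (Nat.ceil ℓ : ℝ) *
      (fun m : ℕ => sSup {r : ℝ | ∃ δ : Fin p → ℝ,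
        1 ≤ (univ.filter fun j => δ j ≠ 0).card ∧
        (univ.filter fun j => δ j ≠ 0).card ≤ m ∧
        (∑ j, (δ j) ^ 2) = 1 ∧ r = δ ⬝ᵥ M.mulVec δ}) k :=
  sparse_eigenvalue_sublinear_general p M hM k ℓ
end

section
/- In the setting of the ℓ₁-penalized quantile regression with penalty λ_u, suppose the regularization event λ_u/n ≥ c‖E_n[(u − 1{ỹ_i ≤ x̃_i'η_u + r_{ui}})x̃_i]‖_∞ holds with c > 1, and the remainder R̂(η) := E_n[ρ_u(ỹ−x̃'η)] − E_n[ρ_u(ỹ−x̃'η_u−r_u)] − E_n[(u−1{ỹ≤x̃'η_u+r_u})(x̃'η−x̃'η_u−r_u)] is nonnegative. If δ̃ = η̃ − η_u satisfies E_n[ρ_u(ỹ−x̃'η̃)] − E_n[ρ_u(ỹ−x̃'η_u)] ≤ (λ_u/n)(‖η_u‖₁ − ‖η̃‖₁), then with c̄ = (c+1)/(c−1), ‖δ̃_{T_u^c}‖₁ ≤ c̄‖δ̃_{T_u}‖₁ + (nc/(λ_u(c−1)))R̂(η_u), where T_u = supp(η_u). -/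
open Finset

/-- The quantile check function `ρ_u(t) = t(u − 1{t ≤ 0})`. -/
noncomputable def rhoCheck (u t : ℝ) : ℝ := t * (u - if t ≤ 0 then 1 else 0)

/-- The Knight-identity remainder of the empirical quantile regression objective at `η`:
`R̂(η) = E_n[ρ_u(ỹ−x̃'η)] − E_n[ρ_u(ỹ−x̃'η_u−r_u)] − E_n[(u−1{ỹ≤x̃'η_u+r_u})(x̃'η−x̃'η_u−r_u)]`. -/
noncomputable def RhatQR (n p : ℕ) (u : ℝ) (x : Fin n → Fin p → ℝ) (ytil : Fin n → ℝ)
    (ηu : Fin p → ℝ) (r : Fin n → ℝ) (η : Fin p → ℝ) : ℝ :=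
  (1 / (n : ℝ)) * ∑ i, rhoCheck u (ytil i - ∑ j, x i j * η j) -
    (1 / (n : ℝ)) * ∑ i, rhoCheck u (ytil i - (∑ j, x i j * ηu j) - r i) -
    (1 / (n : ℝ)) * ∑ i,
      (u - if ytil i ≤ (∑ j, x i j * ηu j) + r i then 1 else 0) *
        ((∑ j, x i j * η j) - (∑ j, x i j * ηu j) - r i)

/-!
Since `R̂` is the objective `Q` minus its linearisation at the true coefficient, `R̂(η̃) − R̂(η_u)`
is the objective gap `Q(η̃) − Q(η_u)` minus the score term `S'δ̃` (with `S = scoreQR`).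
The objective gap is at most `(λ/n)(‖δ̃_{T_u}‖₁ − ‖δ̃_{T_u^c}‖₁)`, and on the regularization
event `|S'δ̃| ≤ (λ/(cn))‖δ̃‖₁`. Hence `0 ≤ R̂(η̃)` gives
`(λ/n)(1 − 1/c)‖δ̃_{T_u^c}‖₁ ≤ (λ/n)(1 + 1/c)‖δ̃_{T_u}‖₁ + R̂(η_u)`.
-/

noncomputable def scoreQR (n p : ℕ) (u : ℝ) (x : Fin n → Fin p → ℝ) (ytil : Fin n → ℝ)
    (ηu : Fin p → ℝ) (r : Fin n → ℝ) (j : Fin p) : ℝ :=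
  (1 / (n : ℝ)) * ∑ i, (u - if ytil i ≤ (∑ j', x i j' * ηu j') + r i then 1 else 0) * x i j

theorem RhatQR_sub_RhatQR (n p : ℕ) (u : ℝ) (x : Fin n → Fin p → ℝ) (ytil : Fin n → ℝ)
    (ηu : Fin p → ℝ) (r : Fin n → ℝ) (η : Fin p → ℝ) :
    RhatQR n p u x ytil ηu r η - RhatQR n p u x ytil ηu r ηu =
      ((1 / (n : ℝ)) * ∑ i, rhoCheck u (ytil i - ∑ j, x i j * η j) -
        (1 / (n : ℝ)) * ∑ i, rhoCheck u (ytil i - ∑ j, x i j * ηu j)) -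
      ∑ j, scoreQR n p u x ytil ηu r j * (η j - ηu j) := by
  have hscore : ∑ j, scoreQR n p u x ytil ηu r j * (η j - ηu j) =
      (1 / (n : ℝ)) * ∑ i, (u - if ytil i ≤ (∑ j', x i j' * ηu j') + r i then 1 else 0) *
        ((∑ j, x i j * η j) - ∑ j, x i j * ηu j) := by
    simp only [scoreQR, ← sum_sub_distrib, mul_sum, sum_mul]
    rw [sum_comm]
    exact sum_congr rfl fun i _ => sum_congr rfl fun j _ => by ring
  rw [hscore, RhatQR, RhatQR]
  simp only [sub_self, zero_sub, mul_neg, sum_neg_distrib, mul_sub, sum_sub_distrib]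
  ring

theorem abs_sum_mul_le_mul_sum_abs {ι : Type*} (s : Finset ι) (a d : ι → ℝ) {M : ℝ}
    (ha : ∀ j ∈ s, |a j| ≤ M) : |∑ j ∈ s, a j * d j| ≤ M * ∑ j ∈ s, |d j| := by
  rw [mul_sum]
  refine (abs_sum_le_sum_abs _ _).trans (sum_le_sum fun j hj => ?_)
  rw [abs_mul]
  exact mul_le_mul_of_nonneg_right (ha j hj) (abs_nonneg _)

theorem sum_abs_sub_sum_abs_le {ι : Type*} [Fintype ι] (η η' : ι → ℝ) :
    ∑ j, |η j| - ∑ j, |η' j| ≤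
      ∑ j ∈ univ.filter (fun j => η j ≠ 0), |η' j - η j| -
        ∑ j ∈ univ.filter (fun j => η j = 0), |η' j - η j| := by
  rw [← sum_filter_add_sum_filter_not univ (fun j => η j = 0) (fun j => |η j|),
    ← sum_filter_add_sum_filter_not univ (fun j => η j = 0) (fun j => |η' j|)]
  have hzero : ∑ j ∈ univ.filter (fun j => η j = 0), |η j| = 0 :=
    sum_eq_zero fun j hj => by simp [(mem_filter.1 hj).2]
  have hoff : ∑ j ∈ univ.filter (fun j => η j = 0), |η' j| =
      ∑ j ∈ univ.filter (fun j => η j = 0), |η' j - η j| :=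
    sum_congr rfl fun j hj => by simp [(mem_filter.1 hj).2]
  have hon : ∑ j ∈ univ.filter (fun j => η j ≠ 0), (|η j| - |η' j|) ≤
      ∑ j ∈ univ.filter (fun j => η j ≠ 0), |η' j - η j| :=
    sum_le_sum fun j _ => (abs_sub_abs_le_abs_sub _ _).trans_eq (abs_sub_comm _ _)
  rw [sum_sub_distrib] at hon
  linarith

theorem le_of_cone_inequality {A B R L q c : ℝ} (hc : 1 < c) (hq : 0 < q)
    (hL : |L| ≤ q / c * (A + B)) (h : 0 ≤ R + q * (B - A) - L) :
    A ≤ (c + 1) / (c - 1) * B + c / (q * (c - 1)) * R := by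
  have hc1 : 0 < c - 1 := by linarith
  have hcq : q * (c - 1) * A ≤ q * (c + 1) * B + c * R := by
    have hL' := (neg_le_abs L).trans hL
    rw [div_mul_eq_mul_div, le_div_iff₀ (by linarith)] at hL'
    nlinarith
  rw [div_mul_eq_mul_div, div_mul_eq_mul_div, div_add_div _ _ hc1.ne' (by positivity),
    le_div_iff₀ (by positivity)]
  nlinarith

theorem restricted_set_l1_qr_general (n p : ℕ) (hn : 0 < n)
    (x : Fin n → Fin p → ℝ) (ytil : Fin n → ℝ) (u : ℝ)
    (ηu : Fin p → ℝ) (r : Fin n → ℝ) (ηtil : Fin p → ℝ)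
    (lam c : ℝ) (hc : 1 < c) (hlam : 0 < lam)
    (hreg : ∀ j : Fin p,
      c * |(1 / (n : ℝ)) * ∑ i,
        (u - if ytil i ≤ (∑ j', x i j' * ηu j') + r i then 1 else 0) * x i j| ≤ lam / n)
    (hRnn : ∀ η : Fin p → ℝ, 0 ≤ RhatQR n p u x ytil ηu r η)
    (hopt : (1 / (n : ℝ)) * ∑ i, rhoCheck u (ytil i - ∑ j, x i j * ηtil j) -
        (1 / (n : ℝ)) * ∑ i, rhoCheck u (ytil i - ∑ j, x i j * ηu j) ≤
      (lam / n) * ((∑ j, |ηu j|) - ∑ j, |ηtil j|)) :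
    ∑ j ∈ univ.filter (fun j => ηu j = 0), |ηtil j - ηu j| ≤
      ((c + 1) / (c - 1)) * ∑ j ∈ univ.filter (fun j => ηu j ≠ 0), |ηtil j - ηu j| +
        ((n : ℝ) * c / (lam * (c - 1))) * RhatQR n p u x ytil ηu r ηu := by
  have hq : 0 < lam / n := div_pos hlam (Nat.cast_pos.mpr hn)
  have hscore : |∑ j, scoreQR n p u x ytil ηu r j * (ηtil j - ηu j)| ≤
      lam / n / c * (∑ j ∈ univ.filter (fun j => ηu j = 0), |ηtil j - ηu j| +
        ∑ j ∈ univ.filter (fun j => ηu j ≠ 0), |ηtil j - ηu j|) := by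
    rw [sum_filter_add_sum_filter_not]
    exact abs_sum_mul_le_mul_sum_abs _ _ _ fun j _ =>
      (le_div_iff₀' (by linarith)).2 (hreg j)
  have hpen := mul_le_mul_of_nonneg_left (sum_abs_sub_sum_abs_le ηu ηtil) hq.le
  have hknight := RhatQR_sub_RhatQR n p u x ytil ηu r ηtil
  have hconst : (n : ℝ) * c / (lam * (c - 1)) = c / (lam / n * (c - 1)) := by
    field_simp
  rw [hconst]
  exact le_of_cone_inequality hc hq hscore (by linarith [hRnn ηtil])

/-- Restricted-set inclusion for `ℓ₁`-penalized quantile regression.  Suppose the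
regularization event `λ_u/n ≥ c ‖E_n[(u − 1{ỹ_i ≤ x̃_i'η_u + r_{ui}}) x̃_i]‖_∞` holds with
`c > 1`, and the Knight remainder `R̂` is nonnegative.  If `δ̃ = η̃ − η_u` satisfies
`E_n[ρ_u(ỹ−x̃'η̃)] − E_n[ρ_u(ỹ−x̃'η_u)] ≤ (λ_u/n)(‖η_u‖₁ − ‖η̃‖₁)`, then, with
`c̄ = (c+1)/(c−1)` and `T_u = supp(η_u)`,
`‖δ̃_{T_u^c}‖₁ ≤ c̄ ‖δ̃_{T_u}‖₁ + (nc/(λ_u(c−1))) R̂(η_u)`. -/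
theorem restricted_set_l1_qr (n p : ℕ) (hn : 0 < n)
    (x : Fin n → Fin p → ℝ) (ytil : Fin n → ℝ) (u : ℝ) (hu : u ∈ Set.Ioo (0:ℝ) 1)
    (ηu : Fin p → ℝ) (r : Fin n → ℝ) (ηtil : Fin p → ℝ)
    (lam c : ℝ) (hc : 1 < c) (hlam : 0 < lam)
    (hreg : ∀ j : Fin p,
      c * |(1 / (n : ℝ)) * ∑ i,
        (u - if ytil i ≤ (∑ j', x i j' * ηu j') + r i then 1 else 0) * x i j| ≤ lam / n)
    (hRnn : ∀ η : Fin p → ℝ, 0 ≤ RhatQR n p u x ytil ηu r η)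
    (hopt : (1 / (n : ℝ)) * ∑ i, rhoCheck u (ytil i - ∑ j, x i j * ηtil j) -
        (1 / (n : ℝ)) * ∑ i, rhoCheck u (ytil i - ∑ j, x i j * ηu j) ≤
      (lam / n) * ((∑ j, |ηu j|) - ∑ j, |ηtil j|)) :
    ∑ j ∈ univ.filter (fun j => ηu j = 0), |ηtil j - ηu j| ≤
      ((c + 1) / (c - 1)) * ∑ j ∈ univ.filter (fun j => ηu j ≠ 0), |ηtil j - ηu j| +
        ((n : ℝ) * c / (lam * (c - 1))) * RhatQR n p u x ytil ηu r ηu :=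
  restricted_set_l1_qr_general n p hn x ytil u ηu r ηtil lam c hc hlam hreg hRnn hopt
end

section
/- In the quantile model ỹ_i = x̃_i'η_u + r_{ui} + ε_i with u-quantile(ε_i | x̃_i) = 0 and conditional density bounded by f̄, the Knight-identity remainder R̂(η_u) = −E_n[r_{ui} ∫₀¹ (1{ε_{ui} ≤ −t r_{ui}} − 1{ε_{ui} ≤ 0}) dt] is nonnegative and satisfies Ē[R̂(η_u)] ≤ f̄ ‖r_{ui}‖²_{2,n}/2. -/
/-!
Whatever the sign of `r`, for `t ≥ 0` the integrand `r (1{ε ≤ -t r} - 1{ε ≤ 0})` is pointwise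
nonpositive, which gives nonnegativity. For the expectation, Fubini turns
`E[∫₀¹ (1{ε ≤ -t r} - 1{ε ≤ 0}) dt]` into `∫₀¹ (F(-t r) - F(0)) dt`; the mean value theorem bounds
`|F(-t r) - F(0)|` by `f̄ t |r|`, and `∫₀¹ t dt = 1/2`.
-/

open MeasureTheory intervalIntegral Finset

noncomputable def knightIntegrand (e r t : ℝ) : ℝ :=
  (if e ≤ -t * r then 1 else 0) - if e ≤ 0 then 1 else 0

noncomputable def knightIntegral (e r : ℝ) : ℝ :=
  ∫ t in (0:ℝ)..1, knightIntegrand e r t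

lemma mul_knightIntegrand_nonpos {e r t : ℝ} (ht : 0 ≤ t) : r * knightIntegrand e r t ≤ 0 := by
  unfold knightIntegrand
  split_ifs <;> nlinarith

lemma mul_knightIntegral_nonpos (e r : ℝ) : r * knightIntegral e r ≤ 0 := by
  rw [knightIntegral, ← intervalIntegral.integral_const_mul, ← neg_nonneg,
    ← intervalIntegral.integral_neg]
  exact integral_nonneg zero_le_one fun t ht => neg_nonneg.2 (mul_knightIntegrand_nonpos ht.1)

lemma neg_mul_sq_div_two_le_mul_integral_sub {F f : ℝ → ℝ} {C : ℝ}
    (hF : ∀ x, HasDerivAt F (f x) x) (hf : ∀ x, |f x| ≤ C) (r : ℝ) :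
    -(C * r ^ 2 / 2) ≤ r * ∫ t in (0:ℝ)..1, (F (-t * r) - F 0) := by
  have hLipschitz (x : ℝ) : |F x - F 0| ≤ C * |x| := by
    simpa using convex_univ.norm_image_sub_le_of_norm_hasDerivWithin_le
      (fun x _ => (hF x).hasDerivWithinAt) (fun x _ => hf x) (Set.mem_univ 0) (Set.mem_univ x)
  have hcont : Continuous F := continuous_iff_continuousAt.2 fun x => (hF x).continuousAt
  have hpointwise (t : ℝ) (ht : t ∈ Set.Icc (0:ℝ) 1) :
      -(C * r ^ 2 * t) ≤ r * (F (-t * r) - F 0) := by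
    have h := hLipschitz (-t * r)
    rw [abs_mul, abs_neg, abs_of_nonneg ht.1] at h
    refine neg_le_of_abs_le ?_
    calc |r * (F (-t * r) - F 0)| ≤ |r| * (C * (t * |r|)) := by
          rw [abs_mul]; exact mul_le_mul_of_nonneg_left h (abs_nonneg r)
      _ = C * |r| ^ 2 * t := by ring
      _ = C * r ^ 2 * t := by rw [sq_abs]
  calc -(C * r ^ 2 / 2) = ∫ t in (0:ℝ)..1, -(C * r ^ 2 * t) := by
        rw [intervalIntegral.integral_neg, intervalIntegral.integral_const_mul, integral_id]; ring
    _ ≤ ∫ t in (0:ℝ)..1, r * (F (-t * r) - F 0) :=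
        integral_mono_on zero_le_one (Continuous.intervalIntegrable (by fun_prop) 0 1)
          (Continuous.intervalIntegrable (by fun_prop) 0 1) hpointwise
    _ = r * ∫ t in (0:ℝ)..1, (F (-t * r) - F 0) := intervalIntegral.integral_const_mul _ _

section Expectation

variable {Ω : Type*} [MeasurableSpace Ω] (μ : Measure Ω) {X : Ω → ℝ}

lemma integral_ite_le_eq_measureReal (hX : Measurable X) (c : ℝ) :
    ∫ ω, (if X ω ≤ c then (1:ℝ) else 0) ∂μ = μ.real {ω | X ω ≤ c} :=
  integral_indicator_one (measurableSet_le hX measurable_const)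

variable [IsFiniteMeasure μ]

lemma integrable_ite_le (hX : Measurable X) (c : ℝ) :
    Integrable (fun ω => if X ω ≤ c then (1:ℝ) else 0) μ :=
  (integrable_const (1:ℝ)).indicator (measurableSet_le hX measurable_const)

lemma integral_knightIntegrand (hX : Measurable X) (r t : ℝ) :
    ∫ ω, knightIntegrand (X ω) r t ∂μ = μ.real {ω | X ω ≤ -t * r} - μ.real {ω | X ω ≤ 0} := by
  rw [← integral_ite_le_eq_measureReal μ hX, ← integral_ite_le_eq_measureReal μ hX,
    ← integral_sub (integrable_ite_le μ hX _) (integrable_ite_le μ hX _)]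
  rfl

lemma integrable_uncurry_knightIntegrand (hX : Measurable X) (r : ℝ) :
    Integrable (Function.uncurry fun ω t => knightIntegrand (X ω) r t)
      (μ.prod (volume.restrict (Set.Ioc 0 1))) := by
  have : IsFiniteMeasure (volume.restrict (Set.Ioc (0:ℝ) 1)) := ⟨by simp⟩
  refine (integrable_const (2:ℝ)).mono' ?_ (Filter.Eventually.of_forall fun ⟨ω, t⟩ => ?_)
  · refine Measurable.aestronglyMeasurable (Measurable.sub ?_ ?_) <;>
      refine Measurable.ite (measurableSet_le (hX.comp measurable_fst) ?_) measurable_const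
        measurable_const
    · exact measurable_snd.neg.mul_const r
    · exact measurable_const
  · simp only [Function.uncurry_apply_pair, knightIntegrand, Real.norm_eq_abs]
    split_ifs <;> norm_num

lemma integrable_knightIntegral (hX : Measurable X) (r : ℝ) :
    Integrable (fun ω => knightIntegral (X ω) r) μ := by
  simpa only [knightIntegral, intervalIntegral.integral_of_le zero_le_one,
    Function.uncurry_apply_pair]
    using (integrable_uncurry_knightIntegrand μ hX r).integral_prod_left

lemma integral_knightIntegral (hX : Measurable X) (r : ℝ) :
    ∫ ω, knightIntegral (X ω) r ∂μ =
      ∫ t in (0:ℝ)..1, (μ.real {ω | X ω ≤ -t * r} - μ.real {ω | X ω ≤ 0}) := by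
  simp only [knightIntegral, intervalIntegral.integral_of_le zero_le_one]
  rw [integral_integral_swap (integrable_uncurry_knightIntegrand μ hX r)]
  exact integral_congr_ae (Filter.Eventually.of_forall (integral_knightIntegrand μ hX r))

lemma neg_mul_sq_div_two_le_mul_integral_knightIntegral (hX : Measurable X) {F f : ℝ → ℝ}
    {C : ℝ} (hF_cdf : ∀ t, F t = μ.real {ω | X ω ≤ t}) (hF : ∀ x, HasDerivAt F (f x) x)
    (hf : ∀ x, |f x| ≤ C) (r : ℝ) :
    -(C * r ^ 2 / 2) ≤ r * ∫ ω, knightIntegral (X ω) r ∂μ := by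
  simpa only [integral_knightIntegral μ hX, ← hF_cdf]
    using neg_mul_sq_div_two_le_mul_integral_sub hF hf r

end Expectation

theorem knight_remainder_bound_general
    {Ω : Type*} [MeasurableSpace Ω] (μ : Measure Ω) [IsProbabilityMeasure μ]
    (n : ℕ) (ε : Fin n → Ω → ℝ) (hεmeas : ∀ i, Measurable (ε i))
    (r : Fin n → ℝ) (F f : Fin n → ℝ → ℝ) (fbar : ℝ)
    (hcdf : ∀ i t, F i t = (μ {ω | ε i ω ≤ t}).toReal)
    (hFderiv : ∀ i t, HasDerivAt (F i) (f i t) t)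
    (hfnn : ∀ i t, 0 ≤ f i t) (hfb : ∀ i t, f i t ≤ fbar) :
    (∀ ω, 0 ≤ -((1 / (n : ℝ)) * ∑ i, r i *
        ∫ t in (0:ℝ)..1, ((if ε i ω ≤ -t * r i then (1:ℝ) else 0) -
          if ε i ω ≤ 0 then 1 else 0))) ∧
    (∫ ω, -((1 / (n : ℝ)) * ∑ i, r i *
        ∫ t in (0:ℝ)..1, ((if ε i ω ≤ -t * r i then (1:ℝ) else 0) -
          if ε i ω ≤ 0 then 1 else 0)) ∂μ) ≤
      fbar * ((1 / (n : ℝ)) * ∑ i, (r i) ^ 2) / 2 := by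
  have hn : (0:ℝ) ≤ 1 / n := by positivity
  refine ⟨fun ω => neg_nonneg.2 (mul_nonpos_of_nonneg_of_nonpos hn
    (sum_nonpos fun i _ => mul_knightIntegral_nonpos (ε i ω) (r i))), ?_⟩
  have hbound (i : Fin n) := neg_mul_sq_div_two_le_mul_integral_knightIntegral μ (hεmeas i)
    (hcdf i) (hFderiv i) (fun t => (abs_of_nonneg (hfnn i t)).trans_le (hfb i t)) (r i)
  change ∫ ω, -((1 / (n : ℝ)) * ∑ i, r i * knightIntegral (ε i ω) (r i)) ∂μ ≤ _
  rw [MeasureTheory.integral_neg, MeasureTheory.integral_const_mul, integral_finsetSum _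
    fun i _ => (integrable_knightIntegral μ (hεmeas i) (r i)).const_mul (r i)]
  calc -((1 / (n : ℝ)) * ∑ i, ∫ ω, r i * knightIntegral (ε i ω) (r i) ∂μ)
      = 1 / n * ∑ i, -(r i * ∫ ω, knightIntegral (ε i ω) (r i) ∂μ) := by
        simp only [MeasureTheory.integral_const_mul, sum_neg_distrib, mul_neg]
    _ ≤ 1 / n * ∑ i, fbar * r i ^ 2 / 2 := by
        gcongr with i
        exact neg_le.1 (hbound i)
    _ = fbar * ((1 / (n : ℝ)) * ∑ i, (r i) ^ 2) / 2 := by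
        rw [← sum_div, ← mul_sum]; ring

/-- Nonnegativity and expectation bound for the Knight-identity remainder.  In the quantile model
`ỹ_i = x̃_i'η_u + r_{ui} + ε_i` with `u`-quantile(`ε_i` | `x̃_i`) `= 0` (i.e. `F_i(0) = u`) and
conditional density `f_i` bounded by `f̄`, the remainder
`R̂(η_u) = −E_n[r_{ui} ∫₀¹ (1{ε_{ui} ≤ −t r_{ui}} − 1{ε_{ui} ≤ 0}) dt]`
is nonnegative and satisfies `Ē[R̂(η_u)] ≤ f̄ ‖r_{ui}‖²_{2,n} / 2`. -/
theorem knight_remainder_bound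
    {Ω : Type*} [MeasurableSpace Ω] (μ : Measure Ω) [IsProbabilityMeasure μ]
    (n : ℕ) (hn : 0 < n) (ε : Fin n → Ω → ℝ) (hεmeas : ∀ i, Measurable (ε i))
    (r : Fin n → ℝ) (F f : Fin n → ℝ → ℝ) (fbar u : ℝ) (hu : u ∈ Set.Ioo (0:ℝ) 1)
    (hcdf : ∀ i t, F i t = (μ {ω | ε i ω ≤ t}).toReal)
    (hFderiv : ∀ i t, HasDerivAt (F i) (f i t) t)
    (hfnn : ∀ i t, 0 ≤ f i t) (hfb : ∀ i t, f i t ≤ fbar)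
    (hquant : ∀ i, F i 0 = u) :
    (∀ ω, 0 ≤ -((1 / (n : ℝ)) * ∑ i, r i *
        ∫ t in (0:ℝ)..1, ((if ε i ω ≤ -t * r i then (1:ℝ) else 0) -
          if ε i ω ≤ 0 then 1 else 0))) ∧
    (∫ ω, -((1 / (n : ℝ)) * ∑ i, r i *
        ∫ t in (0:ℝ)..1, ((if ε i ω ≤ -t * r i then (1:ℝ) else 0) -
          if ε i ω ≤ 0 then 1 else 0)) ∂μ) ≤
      fbar * ((1 / (n : ℝ)) * ∑ i, (r i) ^ 2) / 2 :=
  knight_remainder_bound_general μ n ε hεmeas r F f fbar hcdf hFderiv hfnn hfb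
end
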